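/- Let q_j, r_j ∈ F_2[w_2, w_3] be as defined by q_0 = r_0 = 1, q_{<0} = r_{<0} = 0, q_j = w_2 q_{j−2} + w_3 q_{j−3}, r_{j+1} = w_2 r_j + w_3² r_{j−2}. Then for every t ≥ 2: r_{2^{t−1} − 2} = q_{2^t − 4} and w_3 r_{2^{t−1} − 4} = q_{2^t − 5}. -/
import Mathlib


open MvPolynomial

/-- The polynomials `q j ∈ F₂[w₂,w₃]` (with `w₂ = X 0`, `w₃ = X 1`): `q 0 = 1`,
`q j = 0` for `j < 0`, and `q j = w₂ q (j-2) + w₃ q (j-3)`. -/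
noncomputable def q3 (j : ℤ) : MvPolynomial (Fin 2) (ZMod 2) :=
  if j < 0 then 0
  else if j = 0 then 1
  else X 0 * q3 (j - 2) + X 1 * q3 (j - 3)
termination_by j.toNat
decreasing_by all_goals omega

/-- The polynomials `r j ∈ F₂[w₂,w₃]`: `r 0 = 1`, `r j = 0` for `j < 0`, and
`r (j+1) = w₂ r j + w₃² r (j-2)`, i.e. `r j = w₂ r (j-1) + w₃² r (j-3)` for `j ≥ 1`. -/
noncomputable def r3 (j : ℤ) : MvPolynomial (Fin 2) (ZMod 2) :=
  if j < 0 then 0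
  else if j = 0 then 1
  else X 0 * r3 (j - 1) + (X 1) ^ 2 * r3 (j - 3)
termination_by j.toNat
decreasing_by all_goals omega

abbrev P2 := MvPolynomial (Fin 2) (ZMod 2)

lemma two_eq_zero' : (2 : P2) = 0 := CharTwo.two_eq_zero

lemma q3_neg {j : ℤ} (h : j < 0) : q3 j = 0 := by rw [q3, if_pos h]

lemma q3_zero : q3 0 = 1 := by rw [q3]; norm_num

lemma q3_rec {j : ℤ} (h : 1 ≤ j) : q3 j = X 0 * q3 (j-2) + X 1 * q3 (j-3) := by
  rw [q3, if_neg (by omega), if_neg (by omega)]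

lemma r3_neg {j : ℤ} (h : j < 0) : r3 j = 0 := by rw [r3, if_pos h]

lemma r3_zero : r3 0 = 1 := by rw [r3]; norm_num

lemma r3_rec {j : ℤ} (h : 1 ≤ j) : r3 j = X 0 * r3 (j-1) + (X 1)^2 * r3 (j-3) := by
  rw [r3, if_neg (by omega), if_neg (by omega)]

/-- Doubling identities for `q3`. -/
lemma qAB : ∀ n : ℤ, q3 (2*n) = q3 n ^ 2 + X 0 * q3 (n-1) ^ 2 ∧
    q3 (2*n+1) = X 1 * q3 (n-1) ^ 2 := by
  suffices h : ∀ k : ℕ, ∀ n : ℤ, n < k → (q3 (2*n) = q3 n ^ 2 + X 0 * q3 (n-1) ^ 2 ∧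
      q3 (2*n+1) = X 1 * q3 (n-1) ^ 2) by
    intro n
    rcases lt_or_ge n 0 with h0 | h0
    · exact h 0 n (by omega)
    · exact h (n.toNat + 1) n (by omega)
  intro k
  induction k with
  | zero =>
    intro n hn
    have hn' : n < 0 := by omega
    constructor
    · rw [q3_neg (by omega : 2*n < 0), q3_neg hn', q3_neg (by omega : n - 1 < 0)]; ring
    · rw [q3_neg (by omega : 2*n+1 < 0), q3_neg (by omega : n - 1 < 0)]; ring
  | succ k ih =>
    intro n hn
    by_cases hnk : n < (k : ℤ)
    · exact ih n hnk
    have hnk' : n = (k : ℤ) := by omega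
    subst hnk'
    rcases Nat.eq_zero_or_pos k with hk | hk
    · subst hk
      constructor
      · rw [show (2:ℤ) * (0:ℕ) = 0 from by norm_num, show ((0:ℕ):ℤ) - 1 = -1 from by norm_num]
        rw [q3_zero, q3_neg (by norm_num : (-1:ℤ) < 0)]
        push_cast
        rw [q3_zero]
        ring
      · rw [show (2:ℤ) * (0:ℕ) + 1 = 1 from by norm_num, show ((0:ℕ):ℤ) - 1 = -1 from by norm_num]
        rw [q3_rec (by norm_num : (1:ℤ) ≤ 1)]
        rw [q3_neg (by norm_num : (1:ℤ) - 2 < 0), q3_neg (by norm_num : (1:ℤ) - 3 < 0),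
          q3_neg (by norm_num : (-1:ℤ) < 0)]
        ring
    have hk1 : (1:ℤ) ≤ (k:ℤ) := by exact_mod_cast hk
    have ihm1 := ih ((k:ℤ)-1) (by omega)
    have ihm2 := ih ((k:ℤ)-2) (by omega)
    constructor
    · rw [q3_rec (by omega : (1:ℤ) ≤ 2*(k:ℤ))]
      rw [show (2*(k:ℤ)-2) = 2*((k:ℤ)-1) from by ring]
      rw [show (2*(k:ℤ)-3) = 2*((k:ℤ)-2)+1 from by ring]
      rw [ihm1.1, ihm2.2]
      rw [q3_rec hk1]
      rw [show ((k:ℤ)-1-1) = (k:ℤ)-2 from by ring, show ((k:ℤ)-2-1) = (k:ℤ)-3 from by ring]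
      linear_combination (-(X 0 * X 1 * q3 ((k:ℤ)-2) * q3 ((k:ℤ)-3)) : P2) * two_eq_zero'
    · rw [q3_rec (by omega : (1:ℤ) ≤ 2*(k:ℤ)+1)]
      rw [show (2*(k:ℤ)+1-2) = 2*((k:ℤ)-1)+1 from by ring]
      rw [show (2*(k:ℤ)+1-3) = 2*((k:ℤ)-1) from by ring]
      rw [ihm1.2, ihm1.1]
      linear_combination (X 0 * X 1 * q3 ((k:ℤ)-1-1) ^ 2 : P2) * two_eq_zero'

/-- Doubling identities for `r3`. -/
lemma rAB : ∀ n : ℤ, r3 (2*n) = r3 n ^ 2 ∧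
    r3 (2*n+1) = X 0 * r3 n ^ 2 + (X 1)^2 * r3 (n-1) ^ 2 := by
  suffices h : ∀ k : ℕ, ∀ n : ℤ, n < k → (r3 (2*n) = r3 n ^ 2 ∧
      r3 (2*n+1) = X 0 * r3 n ^ 2 + (X 1)^2 * r3 (n-1) ^ 2) by
    intro n
    rcases lt_or_ge n 0 with h0 | h0
    · exact h 0 n (by omega)
    · exact h (n.toNat + 1) n (by omega)
  intro k
  induction k with
  | zero =>
    intro n hn
    have hn' : n < 0 := by omega
    constructor
    · rw [r3_neg (by omega : 2*n < 0), r3_neg hn']; ring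
    · rw [r3_neg (by omega : 2*n+1 < 0), r3_neg hn', r3_neg (by omega : n - 1 < 0)]; ring
  | succ k ih =>
    intro n hn
    by_cases hnk : n < (k : ℤ)
    · exact ih n hnk
    have hnk' : n = (k : ℤ) := by omega
    subst hnk'
    rcases Nat.eq_zero_or_pos k with hk | hk
    · subst hk
      constructor
      · rw [show (2:ℤ) * (0:ℕ) = 0 from by norm_num]
        push_cast
        rw [r3_zero]; ring
      · rw [show (2:ℤ) * (0:ℕ) + 1 = 1 from by norm_num, show ((0:ℕ):ℤ) - 1 = -1 from by norm_num]
        rw [r3_rec (by norm_num : (1:ℤ) ≤ 1)]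
        rw [show (1:ℤ) - 1 = 0 from by ring, r3_zero, r3_neg (by norm_num : (1:ℤ) - 3 < 0),
          r3_neg (by norm_num : (-1:ℤ) < 0)]
        push_cast
        rw [r3_zero]
        ring
    have hk1 : (1:ℤ) ≤ (k:ℤ) := by exact_mod_cast hk
    have ihm1 := ih ((k:ℤ)-1) (by omega)
    have ihm2 := ih ((k:ℤ)-2) (by omega)
    have hC : r3 (2*(k:ℤ)) = r3 (k:ℤ) ^ 2 := by
      rw [r3_rec (by omega : (1:ℤ) ≤ 2*(k:ℤ))]
      rw [show (2*(k:ℤ)-1) = 2*((k:ℤ)-1)+1 from by ring]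
      rw [show (2*(k:ℤ)-3) = 2*((k:ℤ)-2)+1 from by ring]
      rw [ihm1.2, ihm2.2]
      rw [r3_rec hk1]
      rw [show ((k:ℤ)-1-1) = (k:ℤ)-2 from by ring, show ((k:ℤ)-2-1) = (k:ℤ)-3 from by ring]
      linear_combination ((X 0 * (X 1)^2 : P2) *
        (r3 ((k:ℤ)-2) ^ 2 - r3 ((k:ℤ)-1) * r3 ((k:ℤ)-3))) * two_eq_zero'
    refine ⟨hC, ?_⟩
    rw [r3_rec (by omega : (1:ℤ) ≤ 2*(k:ℤ)+1)]
    rw [show (2*(k:ℤ)+1-1) = 2*(k:ℤ) from by ring]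
    rw [show (2*(k:ℤ)+1-3) = 2*((k:ℤ)-1) from by ring]
    rw [hC, ihm1.1]

/-- `q_{2^k - 3} = 0` for all `k`. -/
lemma qZ : ∀ k : ℕ, q3 ((2:ℤ)^k - 3) = 0 := by
  intro k
  induction k with
  | zero => rw [show ((2:ℤ)^0 - 3) = -2 from by norm_num, q3_neg (by norm_num)]
  | succ k ih =>
    rw [show ((2:ℤ)^(k+1) - 3) = 2*((2:ℤ)^k - 2) + 1 from by rw [pow_succ]; ring]
    rw [(qAB ((2:ℤ)^k - 2)).2]
    rw [show ((2:ℤ)^k - 2 - 1) = (2:ℤ)^k - 3 from by ring, ih]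
    ring

/-- `r_{2^k-2} = q_{2^k-2}²` and `r_{2^k-1} = q_{2^k-1}² + w₂ q_{2^k-2}²`. -/
lemma rST : ∀ k : ℕ, r3 ((2:ℤ)^k - 2) = q3 ((2:ℤ)^k - 2) ^ 2 ∧
    r3 ((2:ℤ)^k - 1) = q3 ((2:ℤ)^k - 1) ^ 2 + X 0 * q3 ((2:ℤ)^k - 2) ^ 2 := by
  intro k
  induction k with
  | zero =>
    constructor
    · rw [show ((2:ℤ)^0 - 2) = -1 from by norm_num, r3_neg (by norm_num),
        q3_neg (by norm_num : (-1:ℤ) < 0)]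
      ring
    · rw [show ((2:ℤ)^0 - 1) = 0 from by norm_num, show ((2:ℤ)^0 - 2) = -1 from by norm_num,
        r3_zero, q3_zero, q3_neg (by norm_num : (-1:ℤ) < 0)]
      ring
  | succ k ih =>
    have e2 : ((2:ℤ)^(k+1) - 2) = 2*((2:ℤ)^k - 1) := by rw [pow_succ]; ring
    have e1 : ((2:ℤ)^(k+1) - 1) = 2*((2:ℤ)^k - 1) + 1 := by rw [pow_succ]; ring
    have em : ((2:ℤ)^k - 1 - 1) = (2:ℤ)^k - 2 := by ring
    constructor
    · rw [e2, (rAB ((2:ℤ)^k - 1)).1, (qAB ((2:ℤ)^k - 1)).1, em, ih.2]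
    · rw [e1, (rAB ((2:ℤ)^k - 1)).2, (qAB ((2:ℤ)^k - 1)).2, e2, (qAB ((2:ℤ)^k - 1)).1, em,
        ih.1, ih.2]
      ring

/-- `r_{2^{k+1}-4} = q_{2^{k+1}-4}²`. -/
lemma rS2 : ∀ k : ℕ, r3 ((2:ℤ)^(k+1) - 4) = q3 ((2:ℤ)^(k+1) - 4) ^ 2 := by
  intro k
  have e4 : ((2:ℤ)^(k+1) - 4) = 2*((2:ℤ)^k - 2) := by rw [pow_succ]; ring
  have em : ((2:ℤ)^k - 2 - 1) = (2:ℤ)^k - 3 := by ring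
  rw [e4, (rAB ((2:ℤ)^k - 2)).1, (qAB ((2:ℤ)^k - 2)).1, em, qZ k, (rST k).1]
  ring

/-- For every `t ≥ 2`: `r_{2^{t−1} − 2} = q_{2^t − 4}` and
`w₃ r_{2^{t−1} − 4} = q_{2^t − 5}`. -/
theorem r3_eq_q3_special (t : ℕ) (ht : 2 ≤ t) :
    r3 (2 ^ (t - 1) - 2) = q3 (2 ^ t - 4) ∧
    X 1 * r3 (2 ^ (t - 1) - 4) = q3 (2 ^ t - 5) := by
  obtain ⟨k, rfl⟩ : ∃ k, t = k + 2 := ⟨t - 2, by omega⟩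
  have e1 : k + 2 - 1 = k + 1 := rfl
  rw [e1]
  constructor
  · rw [show ((2:ℤ)^(k+2) - 4) = 2*((2:ℤ)^(k+1) - 2) from by rw [pow_succ]; ring]
    rw [(qAB ((2:ℤ)^(k+1) - 2)).1]
    rw [show ((2:ℤ)^(k+1) - 2 - 1) = (2:ℤ)^(k+1) - 3 from by ring, qZ (k+1)]
    rw [(rST (k+1)).1]
    ring
  · rw [show ((2:ℤ)^(k+2) - 5) = 2*((2:ℤ)^(k+1) - 3) + 1 from by rw [pow_succ]; ring]
    rw [(qAB ((2:ℤ)^(k+1) - 3)).2]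
    rw [show ((2:ℤ)^(k+1) - 3 - 1) = (2:ℤ)^(k+1) - 4 from by ring]
    rw [rS2 k]
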